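/- arXiv:1101.1251 — 3 statements merged into one kernel-verified Lean document; each statement's English description precedes it below -/
import Mathlib

section
/- If f is analytic on the upper half-plane Π and f(z) = a^0 + a^1(z-x) + ... + a^n(z-x)^n + o((z-x)^n) as z → x nontangentially, then for each k = 0,...,n the derivative f^{(k)} has nontangential limit k! a^k at x, i.e. lim_{z→x nontangentially} f^{(k)}(z)/k! = a^k. -/
open Complex Filter Finset Metric Set

noncomputable section

/-- The open upper half-plane. -/
def UHP : Set ℂ := {z : ℂ | 0 < z.im}

/-- The Pick class: analytic functions on the upper half-plane with nonnegative
imaginary part there. -/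
def IsPick (f : ℂ → ℂ) : Prop :=
  DifferentiableOn ℂ f UHP ∧ ∀ z ∈ UHP, 0 ≤ (f z).im

/-- A nontangential approach region at `x ∈ ℝ` with aperture `K`. -/
def ntRegion (x K : ℝ) : Set ℂ := {z : ℂ | 0 < z.im ∧ ‖z - x‖ ≤ K * z.im}

/-- `f z → L` as `z → x` nontangentially in the upper half-plane. -/
def NTTendsto (f : ℂ → ℂ) (x : ℝ) (L : ℂ) : Prop :=
  ∀ K > 0, Tendsto f (nhdsWithin (x : ℂ) (ntRegion x K)) (nhds L)

/-- `r z = o((z-x)^n)` as `z → x` nontangentially. -/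
def NTLittleO (r : ℂ → ℂ) (x : ℝ) (n : ℕ) : Prop :=
  NTTendsto (fun z => r z / (z - (x : ℂ)) ^ n) x 0

/-- `f` has the pseudo-Taylor expansion of order `n` about `x` with coefficients `c`. -/
def HasPseudoTaylor (f : ℂ → ℂ) (x : ℝ) (n : ℕ) (c : ℕ → ℂ) : Prop :=
  NTLittleO (fun z => f z - ∑ j ∈ Finset.range (n + 1), c j * (z - (x : ℂ)) ^ j) x n

/-!
Subtracting the Taylor polynomial `P` leaves `g = f - P = o((z - x)^n)` nontangentially. A point
`z` with `|z - x| ≤ K Im z` is the centre of the disc of radius `Im z / 2`, which lies in the wider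
cone of aperture `2K + 1` and within `3/2 |z - x|` of `x`. This radius is comparable to `|z - x|`,
so Cauchy's estimate on that disc gives `g⁽ᵏ⁾(z) = o((z - x)^(n-k))`, in particular `g⁽ᵏ⁾ → 0`.
The derivatives of `P` are continuous with `P⁽ᵏ⁾(x) = k! aᵏ`.
-/

open Asymptotics Topology
open scoped Nat

section TaylorPolynomial

variable {𝕜 : Type*} [NontriviallyNormedField 𝕜]

theorem iteratedDeriv_sum_mul_sub_pow (a : ℕ → 𝕜) (w : 𝕜) (s : Finset ℕ) (k : ℕ) (z : 𝕜) :
    iteratedDeriv k (fun z => ∑ j ∈ s, a j * (z - w) ^ j) z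
      = ∑ j ∈ s, a j * (j.descFactorial k * (z - w) ^ (j - k)) := by
  rw [iteratedDeriv_fun_sum fun j _ => by fun_prop]
  refine sum_congr rfl fun j _ => ?_
  rw [iteratedDeriv_const_mul_field, iteratedDeriv_comp_sub_const k (· ^ j) w]
  exact congrArg _ (iteratedDeriv_pow j k)

theorem iteratedDeriv_sum_mul_sub_pow_self (a : ℕ → 𝕜) (w : 𝕜) {n k : ℕ} (hk : k ≤ n) :
    iteratedDeriv k (fun z => ∑ j ∈ range (n + 1), a j * (z - w) ^ j) w = k ! * a k := by
  rw [iteratedDeriv_sum_mul_sub_pow, sub_self, sum_eq_single k]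
  · simp [Nat.descFactorial_self, mul_comm]
  · intro j _ hjk
    rcases hjk.lt_or_gt with h | h
    · simp [Nat.descFactorial_eq_zero_iff_lt.mpr h]
    · simp [zero_pow (Nat.sub_ne_zero_of_lt h)]
  · simp only [Finset.mem_range]; omega

end TaylorPolynomial

theorem isOpen_UHP : IsOpen UHP := isOpen_lt continuous_const continuous_im

theorem im_le_norm_sub_ofReal (z : ℂ) (x : ℝ) : z.im ≤ ‖z - x‖ := by
  simpa using im_le_norm (z - x)

theorem sub_ne_zero_of_mem_ntRegion {x K : ℝ} {z : ℂ} (hz : z ∈ ntRegion x K) : z - x ≠ 0 :=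
  norm_pos_iff.mp (hz.1.trans_le (im_le_norm_sub_ofReal z x))

theorem ntLittleO_iff_isLittleO {r : ℂ → ℂ} {x : ℝ} {n : ℕ} :
    NTLittleO r x n ↔ ∀ K > 0, r =o[𝓝[ntRegion x K] (x : ℂ)] fun z => (z - x) ^ n := by
  refine forall₂_congr fun K _ => (isLittleO_iff_tendsto' ?_).symm
  filter_upwards [self_mem_nhdsWithin] with z hz hzero
  exact absurd (pow_eq_zero_iff'.mp hzero).1 (sub_ne_zero_of_mem_ntRegion hz)

theorem NTLittleO.ntTendsto_zero {r : ℂ → ℂ} {x : ℝ} {n : ℕ} (h : NTLittleO r x n) :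
    NTTendsto r x 0 := fun K hK =>
  (isLittleO_one_iff ℂ).mp <| (ntLittleO_iff_isLittleO.mp h K hK).trans_isBigO <|
    ((continuous_id.sub continuous_const).pow n).continuousWithinAt.tendsto.isBigO_one ℂ

section ApproachRegion

variable {x K : ℝ} {z w : ℂ}

theorem half_im_le_im_of_norm_sub_le (hw : ‖w - z‖ ≤ z.im / 2) : z.im / 2 ≤ w.im := by
  have := (abs_le.mp ((abs_im_le_norm (w - z)).trans hw)).1
  rw [sub_im] at this
  linarith

theorem norm_sub_ofReal_le_of_norm_sub_le (hw : ‖w - z‖ ≤ z.im / 2) :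
    ‖w - x‖ ≤ 3 / 2 * ‖z - x‖ := by
  have := norm_sub_le_norm_sub_add_norm_sub w z x
  linarith [im_le_norm_sub_ofReal z x]

theorem mem_ntRegion_of_norm_sub_le (hz : z ∈ ntRegion x K) (hw : ‖w - z‖ ≤ z.im / 2) :
    w ∈ ntRegion x (2 * K + 1) := by
  obtain ⟨hz_im, hzK⟩ := hz
  have hw_im := half_im_le_im_of_norm_sub_le hw
  have hK : 0 ≤ K := nonneg_of_mul_nonneg_left ((norm_nonneg _).trans hzK) hz_im
  refine ⟨by linarith, ?_⟩
  calc ‖w - x‖ ≤ ‖w - z‖ + ‖z - x‖ := norm_sub_le_norm_sub_add_norm_sub w z x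
    _ ≤ (2 * K + 1) * (z.im / 2) := by linarith
    _ ≤ (2 * K + 1) * w.im := by gcongr

end ApproachRegion

theorem ntLittleO_iteratedDeriv {g : ℂ → ℂ} {x : ℝ} {n k : ℕ} (hg : DifferentiableOn ℂ g UHP)
    (ho : NTLittleO g x n) (hk : k ≤ n) : NTLittleO (iteratedDeriv k g) x (n - k) := by
  rw [ntLittleO_iff_isLittleO] at ho ⊢
  intro K hK
  refine IsLittleO.of_bound fun c hc => ?_
  -- makes Cauchy's estimate on the disc of radius `Im z / 2` come out as `c * d ^ (n - k)`
  set A : ℝ := k ! * (3 / 2) ^ n * (2 * K) ^ k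
  have hA : 0 < A := by positivity
  obtain ⟨δ, hδ, hsmall⟩ :=
    Metric.mem_nhdsWithin_iff.mp ((ho (2 * K + 1) (by positivity)).bound (div_pos hc hA))
  refine Metric.mem_nhdsWithin_iff.mpr ⟨2 / 3 * δ, by positivity, fun z ⟨hzx, hz⟩ => ?_⟩
  set d := ‖z - x‖
  set r := z.im / 2
  have hr : 0 < r := half_pos hz.1
  have hd : 0 < d := norm_pos_iff.mpr (sub_ne_zero_of_mem_ntRegion hz)
  have hdr : d / (2 * K) ≤ r := by
    rw [div_le_iff₀ (by positivity)]
    calc d ≤ K * z.im := hz.2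
      _ = r * (2 * K) := by ring
  have hsphere : ∀ w ∈ sphere z r, ‖g w‖ ≤ c / A * (3 / 2 * d) ^ n := by
    intro w hw
    have hwz : ‖w - z‖ ≤ r := (mem_sphere_iff_norm.mp hw).le
    have hwx := norm_sub_ofReal_le_of_norm_sub_le (x := x) hwz
    have hwδ : w ∈ ball (x : ℂ) δ := by
      rw [mem_ball_iff_norm] at hzx ⊢
      linarith
    calc ‖g w‖ ≤ c / A * ‖(w - x) ^ n‖ := hsmall ⟨hwδ, mem_ntRegion_of_norm_sub_le hz hwz⟩
      _ ≤ c / A * (3 / 2 * d) ^ n := by rw [norm_pow]; gcongr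
  have hball : closedBall z r ⊆ UHP := fun w hw =>
    hr.trans_le (half_im_le_im_of_norm_sub_le (mem_closedBall_iff_norm.mp hw))
  show ‖iteratedDeriv k g z‖ ≤ c * ‖(z - x) ^ (n - k)‖
  calc ‖iteratedDeriv k g z‖ ≤ k ! * (c / A * (3 / 2 * d) ^ n) / r ^ k :=
        norm_iteratedDeriv_le_of_forall_mem_sphere_norm_le k hr (hg.diffContOnCl_ball hball) hsphere
    _ ≤ k ! * (c / A * (3 / 2 * d) ^ n) / (d / (2 * K)) ^ k := by gcongr
    _ = c * d ^ (n - k) := by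
        obtain ⟨m, rfl⟩ := Nat.exists_eq_add_of_le hk
        rw [Nat.add_sub_cancel_left, mul_pow (3 / 2 : ℝ) d, div_pow d, pow_add d]
        simp only [A]
        field_simp
    _ = c * ‖(z - x) ^ (n - k)‖ := by rw [norm_pow]

theorem pseudoTaylor_implies_nontangential_derivatives (f : ℂ → ℂ) (x : ℝ) (n : ℕ) (a : ℕ → ℂ)
    (hf : DifferentiableOn ℂ f UHP)
    (hexp : HasPseudoTaylor f x n a) :
    ∀ k ≤ n, NTTendsto (fun z => iteratedDeriv k f z / (Nat.factorial k)) x (a k) := by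
  intro k hk K hK
  set P : ℂ → ℂ := fun z => ∑ j ∈ range (n + 1), a j * (z - x) ^ j
  have hP : ContDiff ℂ ⊤ P := by fun_prop
  have hg : DifferentiableOn ℂ (fun z => f z - P z) UHP :=
    hf.sub (hP.differentiable (by simp)).differentiableOn
  have hremainder : NTTendsto (iteratedDeriv k fun z => f z - P z) x 0 :=
    (ntLittleO_iteratedDeriv hg hexp hk).ntTendsto_zero
  have hpoly : Tendsto (iteratedDeriv k P) (𝓝 x) (𝓝 (k ! * a k)) :=
    iteratedDeriv_sum_mul_sub_pow_self a (x : ℂ) hk ▸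
      (hP.continuous_iteratedDeriv k le_top).tendsto _
  have hsplit : ∀ z ∈ UHP,
      iteratedDeriv k f z = iteratedDeriv k (fun z => f z - P z) z + iteratedDeriv k P z := by
    intro z hz
    rw [iteratedDeriv_fun_sub ((hf.contDiffOn isOpen_UHP).contDiffAt (isOpen_UHP.mem_nhds hz))
      (hP.of_le le_top).contDiffAt, sub_add_cancel]
  have hlim := ((hremainder K hK).add (hpoly.mono_left nhdsWithin_le_nhds)).div_const (k ! : ℂ)
  rw [zero_add, mul_div_cancel_left₀ _ (by exact_mod_cast k.factorial_ne_zero)] at hlim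
  exact hlim.congr' (eventually_nhdsWithin_of_forall fun z hz => by dsimp only; rw [hsplit z hz.1])
end
end

section
/- The function f(z) = z/(1 - z log z), defined on the upper half-plane using the principal branch of the logarithm, belongs to the Pick class and satisfies f(z) = z + o(z) as z → 0 nontangentially, but f has no pseudo-Taylor expansion of order 2 about 0. -/
open Complex Filter Finset Metric Set

noncomputable section

/-! Write `f z = 1 / (z⁻¹ - log z)`. On the upper half-plane `Im z⁻¹ < 0` and
`Im (log z) = arg z ≥ 0`, so `Im f ≥ 0`. Moreover `f z - z = z² log z / (1 - z log z)` and
`z log z → 0`, so `f z = z + o(z)`, while `‖(f z - z) / z²‖ ~ ‖log z‖ → ∞`. Truncating an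
expansion of order 2 gives one of order 1, and pseudo-Taylor coefficients are unique, so an
order-2 expansion would have to be `z + c₂ z² + o(z²)`, i.e. `(f z - z) / z² → c₂`. -/

open Topology

lemma ntRegion_subset_compl (x K : ℝ) : ntRegion x K ⊆ {(x : ℂ)}ᶜ := by
  rintro z ⟨hz, -⟩ rfl
  simp at hz

lemma nhdsWithin_ntRegion_neBot (x : ℝ) {K : ℝ} (hK : 1 ≤ K) :
    (𝓝[ntRegion x K] (x : ℂ)).NeBot := by
  rw [← mem_closure_iff_nhdsWithin_neBot]
  have hmaps : MapsTo (fun t : ℝ => (x : ℂ) + t * I) (Ioi 0) (ntRegion x K) := by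
    intro t (ht : 0 < t)
    refine ⟨by simpa using ht, ?_⟩
    simp only [add_sub_cancel_left, norm_mul, norm_real, Real.norm_eq_abs, abs_of_pos ht,
      norm_I, mul_one, add_im, ofReal_im, mul_im, ofReal_re, I_im, I_re, mul_zero, zero_add]
    nlinarith
  simpa using map_mem_closure (by fun_prop) (by simp : (0 : ℝ) ∈ closure (Ioi 0)) hmaps

lemma tendsto_sub_nhdsWithin_ntRegion (x K : ℝ) :
    Tendsto (fun z : ℂ => z - x) (𝓝[ntRegion x K] (x : ℂ)) (𝓝[≠] 0) := by
  refine tendsto_nhdsWithin_iff.2 ⟨?_, ?_⟩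
  · simpa using ((continuous_sub_right (x : ℂ)).tendsto (x : ℂ)).mono_left nhdsWithin_le_nhds
  · filter_upwards [self_mem_nhdsWithin] with z hz
    exact sub_ne_zero.2 (ntRegion_subset_compl x K hz)

lemma NTTendsto.of_tendsto_nhdsNE {f : ℂ → ℂ} {x : ℝ} {L : ℂ}
    (h : Tendsto f (𝓝[≠] (x : ℂ)) (𝓝 L)) : NTTendsto f x L :=
  fun K _ => h.mono_left (nhdsWithin_mono _ (ntRegion_subset_compl x K))

theorem eq_zero_of_tendsto_sum_div_pow {l : Filter ℂ} [l.NeBot] (hl : l ≤ 𝓝[≠] 0) :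
    ∀ {n : ℕ} {d : ℕ → ℂ},
      Tendsto (fun w => (∑ j ∈ range (n + 1), d j * w ^ j) / w ^ n) l (𝓝 0) →
      ∀ j ≤ n, d j = 0
  | 0, d, h, j, hj => by
    obtain rfl : j = 0 := by omega
    simpa using h
  | n + 1, d, h, j, hj => by
    have hw : Tendsto (fun w : ℂ => w) l (𝓝 0) := hl.trans nhdsWithin_le_nhds
    have hne : ∀ᶠ w in l, w ≠ 0 := hl self_mem_nhdsWithin
    have hd0 : d 0 = 0 := by
      have hpoly : Tendsto (fun w => ∑ j ∈ range (n + 2), d j * w ^ j) l (𝓝 (d 0)) := by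
        have := ((by fun_prop : Continuous fun w : ℂ => ∑ j ∈ range (n + 2), d j * w ^ j).tendsto
          0).mono_left (hl.trans nhdsWithin_le_nhds)
        simpa [sum_range_succ'] using this
      refine tendsto_nhds_unique hpoly ?_
      have := h.mul (hw.pow (n + 1))
      rw [zero_mul] at this
      refine this.congr' ?_
      filter_upwards [hne] with w hw0
      exact div_mul_cancel₀ _ (pow_ne_zero _ hw0)
    have hshift : Tendsto (fun w => (∑ j ∈ range (n + 1), d (j + 1) * w ^ j) / w ^ n) l (𝓝 0) := by
      refine h.congr' ?_
      filter_upwards [hne] with w hw0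
      rw [sum_range_succ' _ (n + 1), hd0, zero_mul, add_zero, pow_succ',
        ← mul_div_mul_left _ (w ^ n) hw0, mul_sum]
      simp only [pow_succ', mul_left_comm]
    rcases j with _ | j
    · exact hd0
    · exact eq_zero_of_tendsto_sum_div_pow hl hshift j (by omega)

namespace HasPseudoTaylor

variable {f : ℂ → ℂ} {x : ℝ} {n : ℕ} {c c' : ℕ → ℂ}

theorem of_succ (h : HasPseudoTaylor f x (n + 1) c) : HasPseudoTaylor f x n c := by
  intro K hK
  have hw := tendsto_sub_nhdsWithin_ntRegion x K
  have hlim := ((hw.mono_right nhdsWithin_le_nhds).mul (h K hK)).add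
    ((hw.mono_right nhdsWithin_le_nhds).const_mul (c (n + 1)))
  rw [zero_mul, mul_zero, add_zero] at hlim
  refine hlim.congr' ?_
  filter_upwards [hw self_mem_nhdsWithin] with z (hz : z - x ≠ 0)
  rw [sum_range_succ]
  field_simp
  ring

theorem coeff_eq (h : HasPseudoTaylor f x n c) (h' : HasPseudoTaylor f x n c') {j : ℕ}
    (hj : j ≤ n) : c j = c' j := by
  have := nhdsWithin_ntRegion_neBot x le_rfl
  refine sub_eq_zero.1 (eq_zero_of_tendsto_sum_div_pow (tendsto_sub_nhdsWithin_ntRegion x 1)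
    (d := fun j => c j - c' j) ?_ j hj)
  rw [tendsto_map'_iff]
  have := (h' 1 one_pos).sub (h 1 one_pos)
  rw [sub_zero] at this
  refine this.congr fun z => ?_
  simp only [Function.comp_apply, sub_mul, sum_sub_distrib]
  ring

end HasPseudoTaylor

namespace Complex

lemma norm_log_le (z : ℂ) : ‖log z‖ ≤ |Real.log ‖z‖| + Real.pi :=
  calc ‖log z‖ ≤ |(log z).re| + |(log z).im| := norm_le_abs_re_add_abs_im _
    _ ≤ |Real.log ‖z‖| + Real.pi := by
      rw [log_re, log_im]
      gcongr
      exact abs_arg_le_pi z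

lemma tendsto_mul_log_nhds_zero : Tendsto (fun z : ℂ => z * log z) (𝓝 0) (𝓝 0) := by
  have hbound (z : ℂ) : ‖z * log z‖ ≤ ‖z‖ * |Real.log ‖z‖| + Real.pi * ‖z‖ :=
    calc ‖z * log z‖ ≤ ‖z‖ * (|Real.log ‖z‖| + Real.pi) := by
          rw [norm_mul]; gcongr; exact norm_log_le z
      _ = ‖z‖ * |Real.log ‖z‖| + Real.pi * ‖z‖ := by ring
  refine squeeze_zero_norm hbound ?_
  have hcont : Continuous fun t : ℝ => |t * Real.log t| + Real.pi * t :=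
    Real.continuous_mul_log.abs.add (continuous_const.mul continuous_id)
  simpa [Function.comp_def] using (hcont.comp continuous_norm).tendsto (0 : ℂ)

lemma tendsto_norm_log_nhdsNE_zero : Tendsto (fun z : ℂ => ‖log z‖) (𝓝[≠] 0) atTop := by
  have hre : Tendsto (fun z : ℂ => |Real.log ‖z‖|) (𝓝[≠] 0) atTop :=
    tendsto_abs_atBot_atTop.comp
      (Real.tendsto_log_nhdsNE_zero.comp (tendsto_norm_nhdsNE_zero.mono_right
        (nhdsWithin_mono _ fun _ ht => ne_of_gt ht)))
  refine tendsto_atTop_mono (fun z => ?_) hre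
  simpa [log_re] using abs_re_le_norm (log z)

lemma ne_zero_of_im_pos {z : ℂ} (hz : 0 < z.im) : z ≠ 0 := by
  rintro rfl
  simp at hz

lemma im_inv_sub_log_neg {z : ℂ} (hz : 0 < z.im) : (z⁻¹ - log z).im < 0 := by
  have hinv : (z⁻¹).im < 0 := by
    rw [inv_im]
    exact div_neg_of_neg_of_pos (neg_neg_of_pos hz) (normSq_pos.2 (ne_zero_of_im_pos hz))
  have hlog : 0 ≤ (log z).im := by
    rw [log_im]; exact arg_nonneg_iff.2 hz.le
  rw [sub_im]; linarith

lemma one_sub_mul_log_eq {z : ℂ} (hz : z ≠ 0) : 1 - z * log z = z * (z⁻¹ - log z) := by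
  field_simp

lemma one_sub_mul_log_ne_zero {z : ℂ} (hz : 0 < z.im) : 1 - z * log z ≠ 0 := by
  have hz0 : z ≠ 0 := ne_zero_of_im_pos hz
  rw [one_sub_mul_log_eq hz0]
  exact mul_ne_zero hz0 fun h => by simpa [h] using im_inv_sub_log_neg hz

end Complex

theorem isPick_div_one_sub_mul_log : IsPick fun z : ℂ => z / (1 - z * log z) := by
  constructor
  · intro z hz
    replace hz : 0 < z.im := hz
    refine DifferentiableAt.differentiableWithinAt ?_
    have hlog := differentiableAt_log (mem_slitPlane_iff.2 (Or.inr hz.ne'))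
    exact differentiableAt_id.div ((differentiableAt_const _).sub (differentiableAt_id.mul hlog))
      (one_sub_mul_log_ne_zero hz)
  · intro z hz
    replace hz : 0 < z.im := hz
    have hz0 : z ≠ 0 := ne_zero_of_im_pos hz
    dsimp only
    rw [one_sub_mul_log_eq hz0, div_mul_cancel_left₀ hz0, inv_im]
    exact div_nonneg (by linarith [im_inv_sub_log_neg hz]) (normSq_nonneg _)

lemma div_one_sub_mul_log_sub_self {z : ℂ} (hz : 1 - z * log z ≠ 0) :
    z / (1 - z * log z) - z = z ^ 2 * (log z / (1 - z * log z)) := by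
  field_simp
  ring

lemma eventually_one_sub_mul_log_ne_zero : ∀ᶠ z : ℂ in 𝓝 0, 1 - z * log z ≠ 0 :=
  (tendsto_const_nhds.sub tendsto_mul_log_nhds_zero).eventually_ne (by simp)

lemma tendsto_div_one_sub_mul_log_sub_self_div :
    Tendsto (fun z : ℂ => (z / (1 - z * log z) - z) / z) (𝓝[≠] 0) (𝓝 0) := by
  have hlim := tendsto_mul_log_nhds_zero.div (tendsto_const_nhds.sub tendsto_mul_log_nhds_zero)
    (by simp : (1 : ℂ) - 0 ≠ 0)
  rw [zero_div] at hlim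
  refine (hlim.mono_left nhdsWithin_le_nhds).congr' ?_
  filter_upwards [nhdsWithin_le_nhds eventually_one_sub_mul_log_ne_zero, self_mem_nhdsWithin]
    with z hD (hz : z ≠ 0)
  rw [Pi.div_apply, div_one_sub_mul_log_sub_self hD]
  field_simp

lemma tendsto_norm_div_one_sub_mul_log_sub_self_div_sq :
    Tendsto (fun z : ℂ => ‖(z / (1 - z * log z) - z) / z ^ 2‖) (𝓝[≠] 0) atTop := by
  have hD : Tendsto (fun z : ℂ => ‖1 - z * log z‖⁻¹) (𝓝[≠] 0) (𝓝 1) := by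
    simpa using ((tendsto_const_nhds (x := (1 : ℂ))).sub
      (tendsto_mul_log_nhds_zero.mono_left nhdsWithin_le_nhds)).norm.inv₀ (by simp)
  refine (tendsto_norm_log_nhdsNE_zero.atTop_mul_pos one_pos hD).congr' ?_
  filter_upwards [nhdsWithin_le_nhds eventually_one_sub_mul_log_ne_zero, self_mem_nhdsWithin]
    with z hne (hz : z ≠ 0)
  rw [div_one_sub_mul_log_sub_self hne, mul_div_cancel_left₀ _ (pow_ne_zero 2 hz), norm_div,
    div_eq_mul_inv]

theorem hasPseudoTaylor_div_one_sub_mul_log :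
    HasPseudoTaylor (fun z : ℂ => z / (1 - z * log z)) 0 1 (fun j => if j = 1 then 1 else 0) :=
  NTTendsto.of_tendsto_nhdsNE <| by
    simpa [sum_range_succ] using tendsto_div_one_sub_mul_log_sub_self_div

theorem example_one_over_one_minus_z_log_z :
    IsPick (fun z : ℂ => z / (1 - z * Complex.log z)) ∧
    HasPseudoTaylor (fun z : ℂ => z / (1 - z * Complex.log z)) 0 1
      (fun j => if j = 1 then 1 else 0) ∧
    ¬ ∃ c : ℕ → ℂ, HasPseudoTaylor (fun z : ℂ => z / (1 - z * Complex.log z)) 0 2 c := by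
  refine ⟨isPick_div_one_sub_mul_log, hasPseudoTaylor_div_one_sub_mul_log, ?_⟩
  rintro ⟨c, hc⟩
  have hc0 : c 0 = 0 := by
    simpa using hc.of_succ.coeff_eq hasPseudoTaylor_div_one_sub_mul_log zero_le_one
  have hc1 : c 1 = 1 := by
    simpa using hc.of_succ.coeff_eq hasPseudoTaylor_div_one_sub_mul_log le_rfl
  have := nhdsWithin_ntRegion_neBot 0 le_rfl
  have hrem : Tendsto (fun z : ℂ => (z / (1 - z * log z) - z) / z ^ 2)
      (𝓝[ntRegion 0 1] ((0 : ℝ) : ℂ)) (𝓝 (c 2)) := by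
    have := (hc 1 one_pos).add_const (c 2)
    rw [zero_add] at this
    refine this.congr' ?_
    filter_upwards [self_mem_nhdsWithin] with z hz
    have hz0 : z ≠ 0 := by simpa using ntRegion_subset_compl 0 1 hz
    have hD := one_sub_mul_log_ne_zero hz.1
    simp only [ofReal_zero, sub_zero, sum_range_succ, Finset.range_one, sum_singleton, hc0, hc1]
    field_simp
    ring
  have hnorm := tendsto_norm_div_one_sub_mul_log_sub_self_div_sq.mono_left
    (by simpa using nhdsWithin_mono _ (ntRegion_subset_compl 0 1))
  exact not_tendsto_nhds_of_tendsto_atTop hnorm _ hrem.norm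
end
end

section
/- For an integer ν ≥ 4 and f_ν(z) = -Σ_{k=1}^∞ 1/(k^ν z + k^{ν-1}) on the upper half-plane, for each j = 0,1,...,ν-3 the radial limit lim_{y→0+} f_ν^{(j)}(iy)/j! exists and equals (-1)^{j+1} ζ(ν - j - 1), where ζ is the Riemann zeta function. -/
open Complex Filter Finset Metric Set

noncomputable section

/-!
With `cₖ = (k + 1) ^ ν` and `dₖ = (k + 1) ^ (ν - 1)`, `f_ν z = -∑ₖ 1 / (cₖ z + dₖ)`. On
`Im z > ε` the terms of every termwise-differentiated series are `O(1 / cₖ)`, so the series may be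
differentiated termwise, giving `f_ν⁽ᵐ⁾ z / m! = (-1) ^ (m + 1) ∑ₖ cₖ ^ m / (cₖ z + dₖ) ^ (m + 1)`.
On the imaginary axis `|cₖ i y + dₖ| ≥ dₖ`, so these terms are dominated by
`cₖ ^ m / dₖ ^ (m + 1) = (k + 1) ^ -(ν - m - 1)`, summable for `m ≤ ν - 3`; dominated convergence
lets `y → 0⁺` termwise, and the limit is `ζ(ν - m - 1)`.
-/

open scoped Nat Topology

/-- `invLinearSeries c d m` is `(-1) ^ m / m!` times the `m`-th derivative of
`z ↦ ∑ₖ 1 / (cₖ z + dₖ)`. -/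
def invLinearSeries (c d : ℕ → ℝ) (m : ℕ) (z : ℂ) : ℂ :=
  ∑' k, (c k : ℂ) ^ m / (c k * z + d k) ^ (m + 1)

theorem hasDerivAt_pow_div_linear_pow {𝕜 : Type*} [NontriviallyNormedField 𝕜] (a b : 𝕜)
    (m : ℕ) {z : 𝕜} (hz : a * z + b ≠ 0) :
    HasDerivAt (fun w => a ^ m / (a * w + b) ^ (m + 1))
      (-(m + 1) * (a ^ (m + 1) / (a * z + b) ^ (m + 2))) z := by
  have hlin : HasDerivAt (fun w => a * w + b) a z := by
    simpa using ((hasDerivAt_id z).const_mul a).add_const b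
  refine ((hasDerivAt_const z (a ^ m)).fun_div (hlin.fun_pow (m + 1))
    (pow_ne_zero _ hz)).congr_deriv ?_
  field_simp
  push_cast
  ring

theorem mul_im_le_norm_linear (c d : ℝ) (z : ℂ) :
    c * z.im ≤ ‖(c : ℂ) * z + d‖ := by
  calc c * z.im = ((c : ℂ) * z + d).im := by simp
    _ ≤ |((c : ℂ) * z + d).im| := le_abs_self _
    _ ≤ _ := abs_im_le_norm _

theorem abs_le_norm_linear_mul_I (c d y : ℝ) : |d| ≤ ‖(c : ℂ) * (y * I) + d‖ := by
  calc |d| = |((c : ℂ) * (y * I) + d).re| := by simp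
    _ ≤ _ := abs_re_le_norm _

theorem norm_pow_div_linear_pow_le_of_le_im {c : ℝ} (hc : 0 < c) (d : ℝ) (m : ℕ) {ε : ℝ}
    (hε : 0 < ε) {z : ℂ} (hz : ε ≤ z.im) :
    ‖(c : ℂ) ^ m / (c * z + d) ^ (m + 1)‖ ≤ 1 / ε ^ (m + 1) * (1 / c) := by
  have hden : c * ε ≤ ‖(c : ℂ) * z + d‖ :=
    (mul_le_mul_of_nonneg_left hz hc.le).trans (mul_im_le_norm_linear c d z)
  rw [norm_div, norm_pow, norm_pow, norm_real, Real.norm_of_nonneg hc.le]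
  calc c ^ m / ‖(c : ℂ) * z + d‖ ^ (m + 1) ≤ c ^ m / (c * ε) ^ (m + 1) := by gcongr
    _ = 1 / ε ^ (m + 1) * (1 / c) := by field_simp; ring

theorem norm_pow_div_linear_pow_mul_I_le {c d : ℝ} (hc : 0 ≤ c) (hd : 0 < d) (m : ℕ) (y : ℝ) :
    ‖(c : ℂ) ^ m / (c * (y * I) + d) ^ (m + 1)‖ ≤ c ^ m / d ^ (m + 1) := by
  have hden : d ≤ ‖(c : ℂ) * (y * I) + d‖ := by
    simpa [abs_of_pos hd] using abs_le_norm_linear_mul_I c d y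
  rw [norm_div, norm_pow, norm_pow, norm_real, Real.norm_of_nonneg hc]
  gcongr

section invLinearSeries

variable {c d : ℕ → ℝ}

theorem hasDerivAt_invLinearSeries (hc : ∀ k, 0 < c k) (hsum : Summable fun k => 1 / c k)
    (m : ℕ) {z : ℂ} (hz : 0 < z.im) :
    HasDerivAt (invLinearSeries c d m) (-(m + 1) * invLinearSeries c d (m + 1) z) z := by
  set ε := z.im / 2
  have hε : 0 < ε := half_pos hz
  have hzε : z ∈ {w : ℂ | ε < w.im} := half_lt_self hz
  have hne : ∀ k, ∀ w : ℂ, ε < w.im → (c k : ℂ) * w + d k ≠ 0 := fun k w hw h =>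
    (mul_pos (hc k) (hε.trans hw)).not_ge
      ((mul_im_le_norm_linear (c k) (d k) w).trans (by simp [h]))
  have hderiv := hasDerivAt_tsum_of_isPreconnected
    ((hsum.mul_left (1 / ε ^ (m + 2))).mul_left ((m : ℝ) + 1))
    (isOpen_lt continuous_const continuous_im) (convex_halfSpace_im_gt ε).isPreconnected
    (fun k w hw => hasDerivAt_pow_div_linear_pow (c k : ℂ) (d k) m (hne k w hw))
    (fun k w hw => ?_) hzε
    ((hsum.mul_left (1 / ε ^ (m + 1))).of_norm_bounded fun k =>
      norm_pow_div_linear_pow_le_of_le_im (hc k) (d k) m hε hzε.le) hzε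
  · rw [tsum_mul_left] at hderiv
    exact hderiv
  · rw [norm_mul]
    gcongr
    · norm_cast
    · exact norm_pow_div_linear_pow_le_of_le_im (hc k) (d k) (m + 1) hε hw.le

theorem iteratedDeriv_neg_invLinearSeries (hc : ∀ k, 0 < c k) (hsum : Summable fun k => 1 / c k)
    (m : ℕ) {z : ℂ} (hz : 0 < z.im) :
    iteratedDeriv m (fun w => -invLinearSeries c d 0 w) z
      = (-1) ^ (m + 1) * m ! * invLinearSeries c d m z := by
  induction m generalizing z with
  | zero => simp
  | succ m ih =>
    have hev : iteratedDeriv m (fun w => -invLinearSeries c d 0 w)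
        =ᶠ[𝓝 z] fun w => (-1) ^ (m + 1) * m ! * invLinearSeries c d m w := by
      filter_upwards [(isOpen_lt continuous_const continuous_im).mem_nhds hz] with w hw
      exact ih hw
    rw [iteratedDeriv_succ, hev.deriv_eq,
      ((hasDerivAt_invLinearSeries hc hsum m hz).const_mul _).deriv, Nat.factorial_succ]
    push_cast
    ring

theorem tendsto_invLinearSeries_mul_I (hc : ∀ k, 0 ≤ c k) (hd : ∀ k, 0 < d k) (m : ℕ)
    (hsum : Summable fun k => c k ^ m / d k ^ (m + 1)) :
    Tendsto (fun y : ℝ => invLinearSeries c d m (y * I)) (𝓝 0)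
      (𝓝 (invLinearSeries c d m 0)) := by
  refine tendsto_tsum_of_dominated_convergence hsum (fun k => ?_)
    (Eventually.of_forall fun y k => norm_pow_div_linear_pow_mul_I_le (hc k) (hd k) m y)
  have hcont : ContinuousAt (fun y : ℝ => (c k : ℂ) ^ m / (c k * (y * I) + d k) ^ (m + 1)) 0 := by
    have : (c k : ℂ) * ((0 : ℝ) * I) + d k ≠ 0 := by simpa using (hd k).ne'
    fun_prop (disch := exact pow_ne_zero _ this)
  simpa using hcont.tendsto

end invLinearSeries

theorem summable_one_div_nat_add_one_pow {p : ℕ} (hp : 1 < p) :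
    Summable fun k : ℕ => 1 / ((k : ℝ) + 1) ^ p := by
  simpa using (summable_nat_add_iff 1).2 (Real.summable_one_div_nat_pow.2 hp)

theorem pow_pow_div_pow_pred_pow {K : Type*} [Field K] {x : K} (hx : x ≠ 0) {ν j : ℕ}
    (hj : j < ν) : (x ^ ν) ^ j / (x ^ (ν - 1)) ^ (j + 1) = 1 / x ^ (ν - j - 1) := by
  obtain ⟨r, rfl⟩ : ∃ r, ν = j + r + 1 := ⟨ν - j - 1, by omega⟩
  rw [show j + r + 1 - 1 = j + r by omega, show j + r + 1 - j - 1 = r by omega, ← pow_mul,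
    ← pow_mul, show (j + r) * (j + 1) = (j + r + 1) * j + r by ring, pow_add,
    div_mul_eq_div_div, div_self (pow_ne_zero _ hx)]

theorem invLinearSeries_zero_eq_riemannZeta {ν j : ℕ} (hj : j + 2 < ν) :
    invLinearSeries (fun k => ((k : ℝ) + 1) ^ ν) (fun k => ((k : ℝ) + 1) ^ (ν - 1)) j 0
      = riemannZeta ((ν : ℂ) - j - 1) := by
  have harg : (ν : ℂ) - j - 1 = ((ν - j - 1 : ℕ) : ℂ) := by
    rw [Nat.cast_sub (by omega), Nat.cast_sub (by omega)]
    simp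
  rw [harg, zeta_eq_tsum_one_div_nat_add_one_cpow (by simp; omega), invLinearSeries]
  refine tsum_congr fun k => ?_
  have hk : (k : ℂ) + 1 ≠ 0 := by exact_mod_cast k.succ_ne_zero
  push_cast
  rw [mul_zero, zero_add, cpow_natCast, pow_pow_div_pow_pred_pow hk (by omega)]

theorem example_fnu_radial_derivatives (ν : ℕ) (hν : 4 ≤ ν) :
    ∀ j ≤ ν - 3,
      Tendsto
        (fun y : ℝ =>
          iteratedDeriv j
            (fun z : ℂ => -∑' k : ℕ, 1 / (((k : ℂ) + 1) ^ ν * z + ((k : ℂ) + 1) ^ (ν - 1)))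
            ((y : ℂ) * Complex.I) / (Nat.factorial j))
        (nhdsWithin 0 (Set.Ioi 0))
        (nhds ((-1) ^ (j + 1) * riemannZeta ((ν : ℂ) - j - 1))) := by
  intro j hj
  set c : ℕ → ℝ := fun k => ((k : ℝ) + 1) ^ ν
  set d : ℕ → ℝ := fun k => ((k : ℝ) + 1) ^ (ν - 1)
  have hf : (fun z : ℂ => -∑' k : ℕ, 1 / (((k : ℂ) + 1) ^ ν * z + ((k : ℂ) + 1) ^ (ν - 1)))
      = fun z => -invLinearSeries c d 0 z := by
    ext z
    simp [invLinearSeries, c, d]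
  have hsum_c : Summable fun k => 1 / c k := summable_one_div_nat_add_one_pow (by omega)
  have hsum_cd : Summable fun k => c k ^ j / d k ^ (j + 1) := by
    refine (summable_one_div_nat_add_one_pow (p := ν - j - 1) (by omega)).congr fun k => ?_
    exact (pow_pow_div_pow_pred_pow (by positivity) (by omega)).symm
  have hlim := ((tendsto_invLinearSeries_mul_I (fun k => by positivity) (fun k => by positivity)
    j hsum_cd).mono_left (nhdsWithin_le_nhds (s := Ioi 0))).const_mul ((-1 : ℂ) ^ (j + 1))
  rw [invLinearSeries_zero_eq_riemannZeta (by omega)] at hlim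
  refine hlim.congr' ?_
  filter_upwards [self_mem_nhdsWithin] with y (hy : 0 < y)
  rw [hf, iteratedDeriv_neg_invLinearSeries (fun k => by positivity) hsum_c j (by simpa using hy)]
  rw [mul_right_comm, mul_div_cancel_right₀ _ (Nat.cast_ne_zero.2 j.factorial_ne_zero)]
end
end
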